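/- arXiv:2409.03146 — 2 statements merged into one kernel-verified Lean document; each statement's English description precedes it below -/
import Mathlib

section
/- Let $V$ be a real inner product space, let $R \geq 0$, and let $A, B \in V$ with $\|A\| > R$ and $\|B\| > R$. Define the line-of-sight indicator $q = \sqrt{\|A\|^2 - R^2} + \sqrt{\|B\|^2 - R^2} - \|A - B\|$. Then $q > 0$ if and only if every point of the closed segment from $A$ to $B$ lies strictly outside the closed ball of radius $R$ centered at the origin, i.e., $\|(1-t)A + tB\| > R$ for all $t \in [0,1]$. -/
/-!
Write `α = √(‖A‖² - R²)` and `β = √(‖B‖² - R²)` for the tangent lengths from `A` and `B` to the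
sphere of radius `R`, and `d = ‖A - B‖`. Along the segment `P t = A - t • (A - B)`,
`‖P t‖² - R² = (α - t d)² + 2 t (α d - ⟪A, A - B⟫)`.
If `‖P t‖ ≤ R` for some `t ∈ (0, 1]`, this forces `α d ≤ ⟪A, A - B⟫`, and symmetrically
`β d ≤ ⟪B, B - A⟫`; the two inner products add up to `d²`, so `α + β ≤ d`.
Conversely, `α + β ≤ d` gives `α d ≤ ⟪A, A - B⟫` (expand `β² ≤ (d - α)²`), and then the point
at `t = α / d`, where the square vanishes, lies in the closed ball.
-/

open scoped RealInnerProductSpace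

section

variable {V : Type*} [NormedAddCommGroup V]

noncomputable def tangentLength (R : ℝ) (A : V) : ℝ := √(‖A‖ ^ 2 - R ^ 2)

theorem tangentLength_nonneg (R : ℝ) (A : V) : 0 ≤ tangentLength R A := Real.sqrt_nonneg _

theorem tangentLength_sq {R : ℝ} {A : V} (h : R ^ 2 ≤ ‖A‖ ^ 2) :
    tangentLength R A ^ 2 = ‖A‖ ^ 2 - R ^ 2 :=
  Real.sq_sqrt (sub_nonneg.mpr h)

theorem tangentLength_pos {R : ℝ} {A : V} (hR : 0 ≤ R) (hA : R < ‖A‖) :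
    0 < tangentLength R A :=
  Real.sqrt_pos.mpr (sub_pos.mpr (pow_lt_pow_left₀ hA hR two_ne_zero))

variable [InnerProductSpace ℝ V]

theorem norm_sub_smul_sq_sub_sq {R : ℝ} {A : V} (h : R ^ 2 ≤ ‖A‖ ^ 2) (v : V) (t : ℝ) :
    ‖A - t • v‖ ^ 2 - R ^ 2 =
      (tangentLength R A - t * ‖v‖) ^ 2 + 2 * t * (tangentLength R A * ‖v‖ - ⟪A, v⟫) := by
  rw [norm_sub_sq_real, real_inner_smul_right, norm_smul, mul_pow, Real.norm_eq_abs, sq_abs]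
  linear_combination -tangentLength_sq h

theorem tangentLength_mul_norm_le_inner {R t : ℝ} {A v : V} (hA : R < ‖A‖) (ht : 0 ≤ t)
    (hle : ‖A - t • v‖ ≤ R) : tangentLength R A * ‖v‖ ≤ ⟪A, v⟫ := by
  have hR : 0 ≤ R := (norm_nonneg _).trans hle
  have ht₀ : 0 < t := by
    refine ht.lt_of_ne fun h ↦ ?_
    subst h
    simp only [zero_smul, sub_zero] at hle
    exact hle.not_gt hA
  have hsq : ‖A - t • v‖ ^ 2 - R ^ 2 ≤ 0 :=
    sub_nonpos.mpr (pow_le_pow_left₀ (norm_nonneg _) hle 2)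
  rw [norm_sub_smul_sq_sub_sq (pow_le_pow_left₀ hR hA.le 2)] at hsq
  have hcross : t * (tangentLength R A * ‖v‖ - ⟪A, v⟫) ≤ 0 := by
    nlinarith [sq_nonneg (tangentLength R A - t * ‖v‖)]
  exact sub_nonpos.mp (nonpos_of_mul_nonpos_right hcross ht₀)

theorem norm_sub_smul_le_of_tangentLength_mul_norm_le_inner {R : ℝ} {A v : V} (hR : 0 ≤ R)
    (hA : R ≤ ‖A‖) (hv : v ≠ 0) (h : tangentLength R A * ‖v‖ ≤ ⟪A, v⟫) :
    ‖A - (tangentLength R A / ‖v‖) • v‖ ≤ R := by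
  have hv' : 0 < ‖v‖ := norm_pos_iff.mpr hv
  have hsq := norm_sub_smul_sq_sub_sq (pow_le_pow_left₀ hR hA 2) v (tangentLength R A / ‖v‖)
  rw [div_mul_cancel₀ _ hv'.ne', sub_self] at hsq
  have hcross : tangentLength R A / ‖v‖ * (tangentLength R A * ‖v‖ - ⟪A, v⟫) ≤ 0 :=
    mul_nonpos_of_nonneg_of_nonpos (div_nonneg (tangentLength_nonneg R A) hv'.le)
      (sub_nonpos.mpr h)
  exact (sq_le_sq₀ (norm_nonneg _) hR).mp (by nlinarith)

theorem inner_sub_add_inner_sub (A B : V) : ⟪A, A - B⟫ + ⟪B, B - A⟫ = ‖A - B‖ ^ 2 := by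
  rw [← real_inner_self_eq_norm_sq, inner_sub_left, inner_sub_right, inner_sub_right,
    inner_sub_right, real_inner_comm A B]
  ring

theorem add_tangentLength_le_norm_sub_of_exists_segment_norm_le {R : ℝ} {A B : V} (hA : R < ‖A‖)
    (hB : R < ‖B‖) (h : ∃ t ∈ Set.Icc (0 : ℝ) 1, ‖(1 - t) • A + t • B‖ ≤ R) :
    tangentLength R A + tangentLength R B ≤ ‖A - B‖ := by
  obtain ⟨t, ⟨ht₀, ht₁⟩, hle⟩ := h
  have hPA : (1 - t) • A + t • B = A - t • (A - B) := by module
  have hPB : (1 - t) • A + t • B = B - (1 - t) • (B - A) := by module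
  have hαd := tangentLength_mul_norm_le_inner hA ht₀ (hPA ▸ hle)
  have hβd := tangentLength_mul_norm_le_inner hB (sub_nonneg.mpr ht₁) (hPB ▸ hle)
  rw [norm_sub_rev B A] at hβd
  have hd : 0 < ‖A - B‖ := by
    refine norm_pos_iff.mpr (sub_ne_zero.mpr fun hAB ↦ ?_)
    rw [hPA, hAB, sub_self, smul_zero, sub_zero] at hle
    exact hle.not_gt hB
  refine le_of_mul_le_mul_right ?_ hd
  rw [add_mul, ← sq, ← inner_sub_add_inner_sub]
  exact add_le_add hαd hβd

theorem exists_segment_norm_le_of_add_tangentLength_le {R : ℝ} {A B : V} (hR : 0 ≤ R)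
    (hA : R < ‖A‖) (hB : R < ‖B‖) (h : tangentLength R A + tangentLength R B ≤ ‖A - B‖) :
    ∃ t ∈ Set.Icc (0 : ℝ) 1, ‖(1 - t) • A + t • B‖ ≤ R := by
  set α := tangentLength R A
  set d := ‖A - B‖
  have hα := tangentLength_pos hR hA
  have hβ := tangentLength_nonneg R B
  have hd : 0 < d := by linarith
  have hαd : α * d ≤ ⟪A, A - B⟫ := by
    have hβ_le : tangentLength R B ^ 2 ≤ (α - d) ^ 2 := by
      rw [← neg_sub, neg_sq]
      exact pow_le_pow_left₀ hβ (by linarith) 2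
    have hB_eq := norm_sub_smul_sq_sub_sq (pow_le_pow_left₀ hR hA.le 2) (A - B) 1
    rw [one_smul, sub_sub_cancel, one_mul, ← tangentLength_sq (pow_le_pow_left₀ hR hB.le 2)]
      at hB_eq
    linarith
  refine ⟨α / d, ⟨by positivity, (div_le_one hd).mpr (by linarith)⟩, ?_⟩
  have hP : (1 - α / d) • A + (α / d) • B = A - (α / d) • (A - B) := by module
  rw [hP]
  exact norm_sub_smul_le_of_tangentLength_mul_norm_le_inner hR hA.le
    (norm_pos_iff.mp hd) hαd

end

/-- Line-of-sight indicator positivity characterizes the segment from `A` to `B`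
staying strictly outside the closed ball of radius `R` about the origin. -/
theorem los_indicator_pos_iff_segment_outside
    (V : Type*) [NormedAddCommGroup V] [InnerProductSpace ℝ V]
    (R : ℝ) (hR : 0 ≤ R) (A B : V) (hA : R < ‖A‖) (hB : R < ‖B‖) :
    0 < Real.sqrt (‖A‖ ^ 2 - R ^ 2) + Real.sqrt (‖B‖ ^ 2 - R ^ 2) - ‖A - B‖ ↔
      ∀ t : ℝ, t ∈ Set.Icc (0 : ℝ) 1 → R < ‖(1 - t) • A + t • B‖ := by
  change 0 < tangentLength R A + tangentLength R B - ‖A - B‖ ↔ _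
  rw [sub_pos, ← not_iff_not]
  push Not
  exact ⟨exists_segment_norm_le_of_add_tangentLength_le hR hA hB,
    add_tangentLength_le_norm_sub_of_exists_segment_norm_le hA hB⟩
end

section
/- Let $V$ be a real inner product space, let $R > 0$, and let $A, B \in V$ with $A \neq B$, $\|A\| > R$ and $\|B\| > R$. If $\|A - B\| > \sqrt{\|A\|^2 - R^2} + \sqrt{\|B\|^2 - R^2}$ (i.e., the line-of-sight indicator $q$ is negative), then some point of the segment from $A$ to $B$ lies in the open ball of radius $R$ about the origin, and the set $\{t \in [0,1] : \|(1-t)A + tB\| = R\}$ has exactly two elements; that is, the segment intersects the sphere of radius $R$ in exactly two points. -/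
/-! Along the segment, `t ↦ ‖(1 - t) • A + t • B‖ ^ 2 - R ^ 2` is a quadratic with positive
leading coefficient `‖B - A‖ ^ 2`, positive at both ends. Writing `α = √(‖A‖² - R²)` and
`d = ‖A - B‖`, the hypothesis `α + √(‖B‖² - R²) < d` makes it negative at `t = α / d`, the point
at distance `α` (the tangent length from `A`) along the segment. A quadratic that is positive at
`0` and `1` and negative somewhere in between has exactly two zeros in `[0, 1]`. -/

open Set

lemma exists_lt_eq_mul_sub_mul_sub_of_neg {a b c t₀ : ℝ} (ha : 0 < a)
    (hneg : a * t₀ ^ 2 + b * t₀ + c < 0) :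
    ∃ r₁ r₂, r₁ < r₂ ∧ ∀ t, a * t ^ 2 + b * t + c = a * (t - r₁) * (t - r₂) := by
  -- `4 a (a t₀² + b t₀ + c) = (2 a t₀ + b)² - (b² - 4 a c)`
  have hdisc : 0 < b ^ 2 - 4 * a * c := by nlinarith [sq_nonneg (2 * a * t₀ + b)]
  set s := √(b ^ 2 - 4 * a * c)
  have hs : s ^ 2 = b ^ 2 - 4 * a * c := Real.sq_sqrt hdisc.le
  have hs0 : 0 < s := Real.sqrt_pos.mpr hdisc
  refine ⟨(-b - s) / (2 * a), (-b + s) / (2 * a), ?_, fun t => ?_⟩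
  · gcongr; linarith
  · field_simp
    linear_combination hs

lemma ncard_zeros_Icc_eq_two_of_quadratic {p : ℝ → ℝ} {a b c t₀ : ℝ}
    (hp : ∀ t, p t = a * t ^ 2 + b * t + c) (ha : 0 < a) (h0 : 0 < p 0) (h1 : 0 < p 1)
    (ht₀ : t₀ ∈ Icc (0 : ℝ) 1) (hneg : p t₀ < 0) :
    {t : ℝ | t ∈ Icc (0 : ℝ) 1 ∧ p t = 0}.ncard = 2 := by
  obtain ⟨r₁, r₂, hr, hfac⟩ := exists_lt_eq_mul_sub_mul_sub_of_neg ha (hp t₀ ▸ hneg)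
  simp only [hp, hfac, mul_assoc] at h0 h1 hneg
  replace h0 := pos_of_mul_pos_right h0 ha.le
  replace h1 := pos_of_mul_pos_right h1 ha.le
  replace hneg := neg_of_mul_neg_right hneg ha.le
  have hr₁t₀ : r₁ < t₀ := by nlinarith
  have ht₀r₂ : t₀ < r₂ := by nlinarith
  have hr₁ : 0 < r₁ := by nlinarith [ht₀.1]
  have hr₂ : r₂ < 1 := by nlinarith [ht₀.2]
  have hzeros : {t : ℝ | t ∈ Icc (0 : ℝ) 1 ∧ p t = 0} = {r₁, r₂} := by
    ext t
    simp only [hp, hfac, mem_ofPred_eq, mem_insert_iff, mem_singleton_iff, mul_eq_zero,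
      ha.ne', false_or, sub_eq_zero]
    constructor
    · exact And.right
    · rintro (rfl | rfl) <;> refine ⟨⟨?_, ?_⟩, by simp⟩ <;> linarith
  rw [hzeros, ncard_pair hr.ne]

section Segment

variable {V : Type*} [NormedAddCommGroup V] [InnerProductSpace ℝ V]

lemma norm_one_sub_smul_add_smul_sq (x y : V) (t : ℝ) :
    ‖(1 - t) • x + t • y‖ ^ 2 = ‖y - x‖ ^ 2 * t ^ 2 + 2 * inner ℝ x (y - x) * t + ‖x‖ ^ 2 := by
  have hxy : (1 - t) • x + t • y = x + t • (y - x) := by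
    rw [smul_sub, sub_smul, one_smul]; abel
  rw [hxy, norm_add_sq_real, real_inner_smul_right, norm_smul, mul_pow, Real.norm_eq_abs, sq_abs]
  ring

lemma ncard_segment_norm_eq_eq_two {R : ℝ} (hR : 0 ≤ R) {A B : V} (hA : R < ‖A‖) (hB : R < ‖B‖)
    {t₀ : ℝ} (ht₀ : t₀ ∈ Icc (0 : ℝ) 1) (hin : ‖(1 - t₀) • A + t₀ • B‖ < R) :
    {t : ℝ | t ∈ Icc (0 : ℝ) 1 ∧ ‖(1 - t) • A + t • B‖ = R}.ncard = 2 := by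
  have hAB : A ≠ B := by
    rintro rfl
    rw [← add_smul, sub_add_cancel, one_smul] at hin
    linarith
  have hzeros : {t : ℝ | t ∈ Icc (0 : ℝ) 1 ∧ ‖(1 - t) • A + t • B‖ = R} =
      {t : ℝ | t ∈ Icc (0 : ℝ) 1 ∧ ‖(1 - t) • A + t • B‖ ^ 2 - R ^ 2 = 0} := by
    simp only [sub_eq_zero, pow_left_inj₀ (norm_nonneg _) hR two_ne_zero]
  rw [hzeros]
  refine ncard_zeros_Icc_eq_two_of_quadratic (b := 2 * inner ℝ A (B - A))
    (c := ‖A‖ ^ 2 - R ^ 2) (fun t => ?_)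
    (pow_pos (norm_pos_iff.mpr (sub_ne_zero.mpr hAB.symm)) 2) ?_ ?_ ht₀ ?_
  · rw [norm_one_sub_smul_add_smul_sq]; ring
  · simpa using (pow_lt_pow_iff_left₀ hR (norm_nonneg A) two_ne_zero).mpr hA
  · simpa using (pow_lt_pow_iff_left₀ hR (norm_nonneg B) two_ne_zero).mpr hB
  · simpa using (pow_lt_pow_iff_left₀ (norm_nonneg _) hR two_ne_zero).mpr hin

lemma exists_mem_Icc_norm_lt_of_sqrt_add_sqrt_lt {R : ℝ} (hR : 0 ≤ R) {A B : V} (hA : R < ‖A‖)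
    (hq : √(‖A‖ ^ 2 - R ^ 2) + √(‖B‖ ^ 2 - R ^ 2) < ‖A - B‖) :
    ∃ t ∈ Icc (0 : ℝ) 1, ‖(1 - t) • A + t • B‖ < R := by
  set α := √(‖A‖ ^ 2 - R ^ 2)
  set d := ‖A - B‖
  have hR2 : R ^ 2 < ‖A‖ ^ 2 := (pow_lt_pow_iff_left₀ hR (norm_nonneg A) two_ne_zero).mpr hA
  have hα : 0 < α := Real.sqrt_pos.mpr (sub_pos.mpr hR2)
  have hα2 : α ^ 2 = ‖A‖ ^ 2 - R ^ 2 := Real.sq_sqrt (sub_pos.mpr hR2).le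
  have hαd : α < d := by linarith [Real.sqrt_nonneg (‖B‖ ^ 2 - R ^ 2)]
  have hd : 0 < d := hα.trans hαd
  have hB : ‖B‖ ^ 2 - R ^ 2 < (d - α) ^ 2 := Real.lt_sq_of_sqrt_lt (by linarith)
  have hBA : ‖B - A‖ = d := norm_sub_rev B A
  set k := 2 * inner ℝ A (B - A)
  have hk : ‖B‖ ^ 2 = d ^ 2 + k + ‖A‖ ^ 2 := by
    simpa [hBA] using norm_one_sub_smul_add_smul_sq A B 1
  -- `2 α d + k = (‖B‖² - R²) - (d - α)²`
  have hneg : 2 * α * d + k < 0 := by linarith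
  refine ⟨α / d, ⟨by positivity, (div_le_one hd).mpr hαd.le⟩, ?_⟩
  rw [← pow_lt_pow_iff_left₀ (norm_nonneg _) hR two_ne_zero, norm_one_sub_smul_add_smul_sq, hBA]
  calc d ^ 2 * (α / d) ^ 2 + k * (α / d) + ‖A‖ ^ 2 = R ^ 2 + α * (2 * α * d + k) / d := by
        field_simp
        linear_combination -d * hα2
    _ < R ^ 2 := by
        linarith [div_neg_of_neg_of_pos (mul_neg_of_pos_of_neg hα hneg) hd]

end Segment

theorem los_indicator_neg_two_sphere_points_general
    (V : Type*) [NormedAddCommGroup V] [InnerProductSpace ℝ V]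
    (R : ℝ) (hR : 0 < R) (A B : V) (hA : R < ‖A‖) (hB : R < ‖B‖)
    (hq : Real.sqrt (‖A‖ ^ 2 - R ^ 2) + Real.sqrt (‖B‖ ^ 2 - R ^ 2) < ‖A - B‖) :
    (∃ t ∈ Set.Icc (0 : ℝ) 1, ‖(1 - t) • A + t • B‖ < R) ∧
      {t : ℝ | t ∈ Set.Icc (0 : ℝ) 1 ∧ ‖(1 - t) • A + t • B‖ = R}.ncard = 2 := by
  obtain ⟨t₀, ht₀, hin⟩ := exists_mem_Icc_norm_lt_of_sqrt_add_sqrt_lt hR.le hA hq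
  exact ⟨⟨t₀, ht₀, hin⟩, ncard_segment_norm_eq_eq_two hR.le hA hB ht₀ hin⟩

/-- If the line-of-sight indicator is negative, the segment from `A` to `B` enters the
open ball of radius `R` about the origin, and it meets the sphere of radius `R` in
exactly two points. -/
theorem los_indicator_neg_two_sphere_points
    (V : Type*) [NormedAddCommGroup V] [InnerProductSpace ℝ V]
    (R : ℝ) (hR : 0 < R) (A B : V) (hAB : A ≠ B) (hA : R < ‖A‖) (hB : R < ‖B‖)
    (hq : Real.sqrt (‖A‖ ^ 2 - R ^ 2) + Real.sqrt (‖B‖ ^ 2 - R ^ 2) < ‖A - B‖) :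
    (∃ t ∈ Set.Icc (0 : ℝ) 1, ‖(1 - t) • A + t • B‖ < R) ∧
      {t : ℝ | t ∈ Set.Icc (0 : ℝ) 1 ∧ ‖(1 - t) • A + t • B‖ = R}.ncard = 2 :=
  los_indicator_neg_two_sphere_points_general V R hR A B hA hB hq
end
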